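/- Fix n ≥ 1, ℏ > 0, a symmetric K ∈ M_n(ℂ) and a skew-symmetric J ∈ M_n(ℂ), and set Λ = K + J. For every a, b ∈ ℂⁿ, the Λ-product series of E(a) and E(b) converges absolutely at every point u ∈ ℂⁿ, and E(a) *_Λ E(b) = exp((1/(2iℏ))·aJbᵀ)·E(a+b). In particular the functions E(a) satisfy the Heisenberg-group relation E(a) *_Λ E(b) = exp((1/(iℏ))·aJbᵀ)·E(b) *_Λ E(a). -/

import Mathlib

open Matrix

/-- Partial derivative `∂_{u_i}` of a function on `ℂⁿ`. -/
noncomputable def pd (n : ℕ) (i : Fin n) (f : (Fin n → ℂ) → ℂ) : (Fin n → ℂ) → ℂ :=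
  fun u => fderiv ℂ f u (Pi.single i 1)

/-- Iterated partial derivatives along a list of indices. -/
noncomputable def iterPd (n : ℕ) (l : List (Fin n)) (f : (Fin n → ℂ) → ℂ) :
    (Fin n → ℂ) → ℂ :=
  l.foldr (pd n) f

/-- The `k`-th term of the `Λ`-product series of `f` and `g` at the point `u`. -/
noncomputable def starTerm (ℏ : ℝ) (n : ℕ) (Λ : Matrix (Fin n) (Fin n) ℂ)
    (f g : (Fin n → ℂ) → ℂ) (u : Fin n → ℂ) (k : ℕ) : ℂ :=
  ((Complex.I * ℏ) ^ k / ((k.factorial : ℂ) * 2 ^ k)) *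
    ∑ i : Fin k → Fin n, ∑ j : Fin k → Fin n,
      (∏ t, Λ (i t) (j t)) *
        (iterPd n (List.ofFn i) f u * iterPd n (List.ofFn j) g u)

/-- The `K`-ordered expression of the star-exponential `e_*^{(1/(iℏ))⟨a,u⟩}`:
`E(a)(u) = exp((1/(4iℏ))·aKaᵀ + (1/(iℏ))·a·uᵀ)`. -/
noncomputable def Efun (ℏ : ℝ) (n : ℕ) (K : Matrix (Fin n) (Fin n) ℂ)
    (a : Fin n → ℂ) : (Fin n → ℂ) → ℂ :=
  fun u => Complex.exp ((1 / (4 * (Complex.I * ℏ))) * (∑ i, ∑ j, a i * K i j * a j) +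
    (1 / (Complex.I * ℏ)) * ∑ i, a i * u i)


/-!
`E(a)` is the exponential of an affine function of `u` with gradient `a / (iℏ)`, so every iterated
partial derivative of it only multiplies it by the corresponding coordinates of `a / (iℏ)`. The
`k`-th term of the `Λ`-product then collapses to `z ^ k / k! · E(a)(u) E(b)(u)` with
`z = aΛbᵀ / (2iℏ)`: the series is the exponential series of `z`. Symmetry of `K` gives
`E(a) E(b) = exp(-aKbᵀ / (2iℏ)) E(a + b)`, which cancels the `K`-part of `z`, and skew-symmetry of
`J` gives `bJaᵀ = -aJbᵀ`, whence the Heisenberg relation.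
-/
theorem Fintype.sum_pi_sum_pi_prod_eq_pow {ι α β R : Type*} [Fintype ι] [DecidableEq ι]
    [Fintype α] [Fintype β] [CommSemiring R] (F : α → β → R) :
    ∑ i : ι → α, ∑ j : ι → β, ∏ t, F (i t) (j t) = (∑ p, ∑ q, F p q) ^ Fintype.card ι := by
  rw [← Finset.card_univ, ← Finset.prod_const, Fintype.prod_sum]
  simp_rw [Fintype.prod_sum]

theorem Matrix.sum_sum_mul_mul_eq_dotProduct_mulVec {ι R : Type*} [Fintype ι] [CommSemiring R]
    (v w : ι → R) (M : Matrix ι ι R) :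
    ∑ i, ∑ j, v i * M i j * w j = v ⬝ᵥ M *ᵥ w := by
  simp only [dotProduct, mulVec, Finset.mul_sum, mul_assoc]

theorem Matrix.dotProduct_mulVec_swap_of_transpose_eq_neg {ι R : Type*} [Fintype ι] [CommRing R]
    {J : Matrix ι ι R} (hJ : Jᵀ = -J) (v w : ι → R) :
    w ⬝ᵥ J *ᵥ v = -(v ⬝ᵥ J *ᵥ w) := by
  rw [← dotProduct_transpose_mulVec, hJ, neg_mulVec, dotProduct_neg]

theorem pd_const_mul (n : ℕ) (i : Fin n) (r : ℂ) (f : (Fin n → ℂ) → ℂ) :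
    pd n i (fun u => r * f u) = fun u => r * pd n i f u := by
  ext u
  change fderiv ℂ (r • f) u _ = r * fderiv ℂ f u _
  rw [fderiv_const_smul_field]
  rfl

theorem pd_exp_dotProduct (n : ℕ) (i : Fin n) (C : ℂ) (c : Fin n → ℂ) :
    pd n i (fun u => Complex.exp (C + c ⬝ᵥ u)) = fun u => c i * Complex.exp (C + c ⬝ᵥ u) := by
  ext u
  have hlin : HasFDerivAt (fun u => C + c ⬝ᵥ u)
      (LinearMap.toContinuousLinearMap (dotProductBilin ℂ ℂ c)) u :=
    (LinearMap.toContinuousLinearMap (dotProductBilin ℂ ℂ c)).hasFDerivAt.const_add C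
  rw [pd, hlin.cexp.fderiv]
  simp [mul_comm]

theorem iterPd_exp_dotProduct (n : ℕ) (l : List (Fin n)) (C : ℂ) (c : Fin n → ℂ) :
    iterPd n l (fun u => Complex.exp (C + c ⬝ᵥ u)) =
      fun u => (l.map c).prod * Complex.exp (C + c ⬝ᵥ u) := by
  induction l with
  | nil => simp [iterPd]
  | cons i l ih =>
    change pd n i (iterPd n l _) = _
    simp only [ih, pd_const_mul, pd_exp_dotProduct, List.map_cons, List.prod_cons]
    ext u
    ring

theorem starTerm_exp_dotProduct (ℏ : ℝ) (n : ℕ) (Λ : Matrix (Fin n) (Fin n) ℂ) (C D : ℂ)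
    (c d u : Fin n → ℂ) (k : ℕ) :
    starTerm ℏ n Λ (fun u => Complex.exp (C + c ⬝ᵥ u)) (fun u => Complex.exp (D + d ⬝ᵥ u)) u k =
      (Complex.I * ℏ / 2 * (c ⬝ᵥ Λ *ᵥ d)) ^ k / k.factorial *
        (Complex.exp (C + c ⬝ᵥ u) * Complex.exp (D + d ⬝ᵥ u)) := by
  have hsum : ∑ i : Fin k → Fin n, ∑ j : Fin k → Fin n, ∏ t, c (i t) * Λ (i t) (j t) * d (j t) =
      (c ⬝ᵥ Λ *ᵥ d) ^ k := by
    simpa only [Fintype.card_fin, Matrix.sum_sum_mul_mul_eq_dotProduct_mulVec] using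
      Fintype.sum_pi_sum_pi_prod_eq_pow (ι := Fin k) (fun p q => c p * Λ p q * d q)
  have hfactor : ∀ (i j : Fin k → Fin n) (x y : ℂ),
      (∏ t, Λ (i t) (j t)) * ((∏ t, c (i t)) * x * ((∏ t, d (j t)) * y)) =
        (∏ t, c (i t) * Λ (i t) (j t) * d (j t)) * (x * y) := by
    intro i j x y
    rw [Finset.prod_mul_distrib, Finset.prod_mul_distrib]
    ring
  simp only [starTerm, iterPd_exp_dotProduct, List.map_ofFn, List.prod_ofFn, Function.comp_def,
    hfactor, ← Finset.sum_mul, hsum]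
  rw [mul_pow, mul_pow, div_pow]
  ring

theorem Efun_eq_exp_dotProduct (ℏ : ℝ) (n : ℕ) (K : Matrix (Fin n) (Fin n) ℂ) (a : Fin n → ℂ) :
    Efun ℏ n K a = fun u => Complex.exp
      (1 / (4 * (Complex.I * ℏ)) * (a ⬝ᵥ K *ᵥ a) + ((1 / (Complex.I * ℏ)) • a) ⬝ᵥ u) := by
  ext u
  simp only [Efun, Matrix.sum_sum_mul_mul_eq_dotProduct_mulVec, smul_dotProduct, smul_eq_mul]
  rfl

theorem starTerm_Efun (ℏ : ℝ) (n : ℕ) (Λ K : Matrix (Fin n) (Fin n) ℂ) (a b u : Fin n → ℂ)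
    (k : ℕ) :
    starTerm ℏ n Λ (Efun ℏ n K a) (Efun ℏ n K b) u k =
      (1 / (2 * (Complex.I * ℏ)) * (a ⬝ᵥ Λ *ᵥ b)) ^ k / k.factorial *
        (Efun ℏ n K a u * Efun ℏ n K b u) := by
  have hscalar : Complex.I * ℏ / 2 * (1 / (Complex.I * ℏ) * (1 / (Complex.I * ℏ))) =
      1 / (2 * (Complex.I * ℏ)) := by
    rcases eq_or_ne (Complex.I * ℏ) 0 with h | h
    · simp [h]
    · field_simp
  rw [Efun_eq_exp_dotProduct, Efun_eq_exp_dotProduct, starTerm_exp_dotProduct]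
  simp only [mulVec_smul, dotProduct_smul, smul_dotProduct, smul_eq_mul]
  congr 3
  linear_combination (a ⬝ᵥ Λ *ᵥ b) * hscalar

theorem hasSum_starTerm_Efun (ℏ : ℝ) (n : ℕ) (Λ K : Matrix (Fin n) (Fin n) ℂ)
    (a b u : Fin n → ℂ) :
    HasSum (starTerm ℏ n Λ (Efun ℏ n K a) (Efun ℏ n K b) u)
      (Complex.exp (1 / (2 * (Complex.I * ℏ)) * (a ⬝ᵥ Λ *ᵥ b)) *
        (Efun ℏ n K a u * Efun ℏ n K b u)) := by
  rw [funext (starTerm_Efun ℏ n Λ K a b u), Complex.exp_eq_exp_ℂ]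
  exact (NormedSpace.expSeries_div_hasSum_exp
    (1 / (2 * (Complex.I * ℏ)) * (a ⬝ᵥ Λ *ᵥ b))).mul_right (Efun ℏ n K a u * Efun ℏ n K b u)

theorem summable_norm_starTerm_Efun (ℏ : ℝ) (n : ℕ) (Λ K : Matrix (Fin n) (Fin n) ℂ)
    (a b u : Fin n → ℂ) :
    Summable fun k => ‖starTerm ℏ n Λ (Efun ℏ n K a) (Efun ℏ n K b) u k‖ := by
  simp_rw [starTerm_Efun, norm_mul]
  exact (NormedSpace.norm_expSeries_div_summable _).mul_right _

theorem Efun_mul_Efun (ℏ : ℝ) (n : ℕ) (K : Matrix (Fin n) (Fin n) ℂ) (hK : Kᵀ = K)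
    (a b u : Fin n → ℂ) :
    Efun ℏ n K a u * Efun ℏ n K b u =
      Complex.exp (-(1 / (2 * (Complex.I * ℏ)) * (a ⬝ᵥ K *ᵥ b))) * Efun ℏ n K (a + b) u := by
  have hsymm : b ⬝ᵥ K *ᵥ a = a ⬝ᵥ K *ᵥ b := by
    rw [← dotProduct_transpose_mulVec, hK]
  simp only [Efun_eq_exp_dotProduct, ← Complex.exp_add]
  congr 1
  simp only [mulVec_add, dotProduct_add, add_dotProduct, smul_add, hsymm]
  ring

theorem hasSum_starTerm_Efun_add_of_transpose_eq (ℏ : ℝ) (n : ℕ) (K J : Matrix (Fin n) (Fin n) ℂ) (hK : Kᵀ = K)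
    (a b u : Fin n → ℂ) :
    HasSum (starTerm ℏ n (K + J) (Efun ℏ n K a) (Efun ℏ n K b) u)
      (Complex.exp (1 / (2 * (Complex.I * ℏ)) * (a ⬝ᵥ J *ᵥ b)) * Efun ℏ n K (a + b) u) := by
  have hexponent : 1 / (2 * (Complex.I * ℏ)) * (a ⬝ᵥ (K + J) *ᵥ b) +
      -(1 / (2 * (Complex.I * ℏ)) * (a ⬝ᵥ K *ᵥ b)) =
        1 / (2 * (Complex.I * ℏ)) * (a ⬝ᵥ J *ᵥ b) := by
    rw [add_mulVec, dotProduct_add]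
    ring
  have h := hasSum_starTerm_Efun ℏ n (K + J) K a b u
  rwa [Efun_mul_Efun ℏ n K hK, ← mul_assoc (Complex.exp _), ← Complex.exp_add, hexponent] at h

theorem statement15_general (n : ℕ) (ℏ : ℝ)
    (K J : Matrix (Fin n) (Fin n) ℂ) (hK : Kᵀ = K) (hJ : Jᵀ = -J) :
    ∀ a b u : Fin n → ℂ,
      -- the Λ-product series converges absolutely at every point
      Summable (fun k => ‖starTerm ℏ n (K + J) (Efun ℏ n K a) (Efun ℏ n K b) u k‖) ∧
      -- and E(a) *_Λ E(b) = exp((1/(2iℏ))·aJbᵀ)·E(a+b)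
      HasSum (starTerm ℏ n (K + J) (Efun ℏ n K a) (Efun ℏ n K b) u)
        (Complex.exp ((1 / (2 * (Complex.I * ℏ))) * ∑ i, ∑ j, a i * J i j * b j) *
          Efun ℏ n K (a + b) u) ∧
      -- Heisenberg relation
      (∑' k, starTerm ℏ n (K + J) (Efun ℏ n K a) (Efun ℏ n K b) u k
        = Complex.exp ((1 / (Complex.I * ℏ)) * ∑ i, ∑ j, a i * J i j * b j) *
          ∑' k, starTerm ℏ n (K + J) (Efun ℏ n K b) (Efun ℏ n K a) u k) := by
  intro a b u
  simp only [Matrix.sum_sum_mul_mul_eq_dotProduct_mulVec]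
  have hab := hasSum_starTerm_Efun_add_of_transpose_eq ℏ n K J hK a b u
  refine ⟨summable_norm_starTerm_Efun ℏ n (K + J) K a b u, hab, ?_⟩
  rw [hab.tsum_eq, (hasSum_starTerm_Efun_add_of_transpose_eq ℏ n K J hK b a u).tsum_eq, add_comm b a,
    Matrix.dotProduct_mulVec_swap_of_transpose_eq_neg hJ a b, ← mul_assoc (Complex.exp _),
    ← Complex.exp_add]
  congr 2
  ring

theorem statement15 (n : ℕ) (hn : 1 ≤ n) (ℏ : ℝ) (hℏ : 0 < ℏ)
    (K J : Matrix (Fin n) (Fin n) ℂ) (hK : Kᵀ = K) (hJ : Jᵀ = -J) :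
    ∀ a b u : Fin n → ℂ,
      -- the Λ-product series converges absolutely at every point
      Summable (fun k => ‖starTerm ℏ n (K + J) (Efun ℏ n K a) (Efun ℏ n K b) u k‖) ∧
      -- and E(a) *_Λ E(b) = exp((1/(2iℏ))·aJbᵀ)·E(a+b)
      HasSum (starTerm ℏ n (K + J) (Efun ℏ n K a) (Efun ℏ n K b) u)
        (Complex.exp ((1 / (2 * (Complex.I * ℏ))) * ∑ i, ∑ j, a i * J i j * b j) *
          Efun ℏ n K (a + b) u) ∧
      -- Heisenberg relation
      (∑' k, starTerm ℏ n (K + J) (Efun ℏ n K a) (Efun ℏ n K b) u k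
        = Complex.exp ((1 / (Complex.I * ℏ)) * ∑ i, ∑ j, a i * J i j * b j) *
          ∑' k, starTerm ℏ n (K + J) (Efun ℏ n K b) (Efun ℏ n K a) u k) :=
  statement15_general n ℏ K J hK hJ
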